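/- arXiv:0906.1790 — 4 statements merged into one kernel-verified Lean document; each statement's English description precedes it below -/
import Mathlib

section
/- For all linear characters ν, ν' of Z and every linear character φ of U, one has ⟨Ind_{ZU}^G(ν⊗φ), Ind_Z^G(ν')⟩_G = [G : ZU] if ν = ν', and ⟨Ind_{ZU}^G(ν⊗φ), Ind_Z^G(ν')⟩_G = 0 if ν ≠ ν'. -/
open scoped Classical

/-- The linear character of a subgroup `H` of `G`, extended by zero to a function on `G`. -/
noncomputable def extChar {G : Type*} [Group G] (H : Subgroup G) (φ : H →* ℂ) : G → ℂ :=
  fun g => if h : g ∈ H then φ ⟨g, h⟩ else 0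

/-- The linear character `ν ⊗ φ` of the subgroup `ZU`, extended by zero to `G`:
its value at `g = z * u` (with `z ∈ Z`, `u ∈ U`) is `ν z * φ u`, and it vanishes off `ZU`. -/
noncomputable def tensorChar {G : Type*} [Group G] [Fintype G] (Z U : Subgroup G)
    (ν : Z →* ℂ) (φ : U →* ℂ) : G → ℂ :=
  fun g => ∑ z : Z, ∑ u : U, if (z : G) * (u : G) = g then ν z * φ u else 0

/-- Induction to `G` of a class function of the subgroup `H`, extended by zero to `G`. -/
noncomputable def indChar {G : Type*} [Group G] [Fintype G] (H : Subgroup G)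
    (f : G → ℂ) : G → ℂ :=
  fun g => (Fintype.card H : ℂ)⁻¹ * ∑ x : G, f (x * g * x⁻¹)

/-- The inner product `⟨α, β⟩_H = |H|⁻¹ * Σ_{x ∈ H} α x * conj (β x)` of (the restrictions to
the subgroup `H` of) two functions `α β : G → ℂ`. -/
noncomputable def innerSub {G : Type*} [Group G] [Fintype G] (H : Subgroup G)
    (α β : G → ℂ) : ℂ :=
  (Fintype.card H : ℂ)⁻¹ * ∑ x : H, α x * (starRingEnd ℂ) (β x)

/-!
Because `Z` is central, `Ind_Z^G ν'` is `[G : Z]` times `ν'` extended by zero, a class function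
of `G`. Frobenius reciprocity against a class function turns the inner product into
`|ZU|⁻¹ [G : Z] Σ_{z ∈ Z} (ν ⊗ φ)(z) conj (ν' z)`; since `Z ∩ U = 1`, `ν ⊗ φ` restricts to `ν`
on `Z`, and orthogonality of linear characters of `Z` gives `|Z|` or `0`.
-/

namespace MonoidHom

variable {Z : Type*} [Group Z] [Fintype Z]

theorem mul_conj_apply_self (ν : Z →* ℂ) (z : Z) : ν z * starRingEnd ℂ (ν z) = 1 := by
  have hpow : ν z ^ Fintype.card Z = 1 := by rw [← map_pow, pow_card_eq_one, map_one]
  rw [Complex.mul_conj, Complex.normSq_eq_norm_sq,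
    Complex.norm_eq_one_of_pow_eq_one hpow Fintype.card_ne_zero]
  norm_num

theorem sum_mul_conj (ν ν' : Z →* ℂ) :
    ∑ z, ν z * starRingEnd ℂ (ν' z) = if ν = ν' then (Fintype.card Z : ℂ) else 0 := by
  let χ : Z →* ℂ := ν * (starRingEnd ℂ : ℂ →* ℂ).comp ν'
  have hχ : χ = 1 ↔ ν = ν' := by
    simp only [MonoidHom.ext_iff]
    refine forall_congr' fun z => ?_
    have hunit := mul_conj_apply_self ν' z
    have hconj : starRingEnd ℂ (ν' z) ≠ 0 := right_ne_zero_of_mul_eq_one hunit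
    change ν z * starRingEnd ℂ (ν' z) = 1 ↔ ν z = ν' z
    rw [← hunit, mul_left_inj' hconj]
  have hsum := sum_hom_units χ
  push_cast at hsum
  rwa [if_congr hχ rfl rfl] at hsum

end MonoidHom

section
variable {G : Type*} [Group G]

theorem extChar_conj {Z : Subgroup G} (hZ : Z ≤ Subgroup.center G) (ν : Z →* ℂ) (x g : G) :
    extChar Z ν (x * g * x⁻¹) = extChar Z ν g := by
  by_cases hg : g ∈ Z
  · rw [Subgroup.mem_center_iff.mp (hZ hg) x, mul_inv_cancel_right]
  · have hconj : x * g * x⁻¹ ∉ Z := fun h => by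
      have hcomm := Subgroup.mem_center_iff.mp (hZ h) x
      have hfix : x * g * x⁻¹ = g := mul_left_cancel (a := x) (by rw [hcomm]; group)
      exact hg (hfix ▸ h)
    simp only [extChar, dif_neg hg, dif_neg hconj]

variable [Fintype G]

theorem cast_index_mul_card (H : Subgroup G) :
    (H.index : ℂ) * Fintype.card H = Fintype.card G := by
  exact_mod_cast by simpa only [Nat.card_eq_fintype_card] using H.index_mul_card

theorem indChar_apply_of_conj_invariant (H : Subgroup G) {f : G → ℂ}
    (hf : ∀ x g, f (x * g * x⁻¹) = f g) (g : G) :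
    indChar H f g = H.index * f g := by
  have hH : (Fintype.card H : ℂ) ≠ 0 := Nat.cast_ne_zero.mpr Fintype.card_ne_zero
  rw [indChar, Finset.sum_congr rfl fun x _ => hf x g, Finset.sum_const, Finset.card_univ,
    nsmul_eq_mul, ← cast_index_mul_card H]
  field_simp

theorem innerSub_top_indChar (H : Subgroup G) (θ : G → ℂ) {ψ : G → ℂ}
    (hψ : ∀ x g, ψ (x * g * x⁻¹) = ψ g) :
    innerSub ⊤ (indChar H θ) ψ =
      (Fintype.card H : ℂ)⁻¹ * ∑ g, θ g * starRingEnd ℂ (ψ g) := by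
  have hG : (Fintype.card G : ℂ) ≠ 0 := Nat.cast_ne_zero.mpr Fintype.card_ne_zero
  have hconj : ∀ x : G, ∑ g, θ (x * g * x⁻¹) * starRingEnd ℂ (ψ g) =
      ∑ g, θ g * starRingEnd ℂ (ψ g) := fun x => by
    calc _ = ∑ g, θ (x * g * x⁻¹) * starRingEnd ℂ (ψ (x * g * x⁻¹)) := by
          simp only [hψ]
      _ = _ := Fintype.sum_equiv (MulAut.conj x).toEquiv _ _ fun _ => rfl
  calc innerSub ⊤ (indChar H θ) ψ
      = (Fintype.card G : ℂ)⁻¹ * ∑ g : G, indChar H θ g * starRingEnd ℂ (ψ g) := by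
        rw [innerSub, Fintype.card_congr Subgroup.topEquiv.toEquiv]
        congr 1
        exact Fintype.sum_equiv Subgroup.topEquiv.toEquiv _ _ fun _ => rfl
    _ = (Fintype.card G : ℂ)⁻¹ * (Fintype.card H : ℂ)⁻¹ *
          ∑ x : G, ∑ g : G, θ (x * g * x⁻¹) * starRingEnd ℂ (ψ g) := by
        simp only [indChar, Finset.sum_mul, Finset.mul_sum, mul_assoc]
        rw [Finset.sum_comm]
    _ = (Fintype.card H : ℂ)⁻¹ * ∑ g, θ g * starRingEnd ℂ (ψ g) := by
        simp only [hconj, Finset.sum_const, Finset.card_univ, nsmul_eq_mul]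
        field_simp

theorem sum_mul_conj_extChar (Z : Subgroup G) (ν : Z →* ℂ) (f : G → ℂ) :
    ∑ g, f g * starRingEnd ℂ (extChar Z ν g) = ∑ z : Z, f z * starRingEnd ℂ (ν z) := by
  calc ∑ g, f g * starRingEnd ℂ (extChar Z ν g)
      = ∑ g with g ∈ Z, f g * starRingEnd ℂ (extChar Z ν g) :=
        (Finset.sum_filter_of_ne fun g _ hne =>
          by_contra fun hg => by simp [extChar, hg] at hne).symm
    _ = ∑ z : Z, f z * starRingEnd ℂ (extChar Z ν z) := Finset.sum_subtype _ (by simp) _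
    _ = ∑ z : Z, f z * starRingEnd ℂ (ν z) := by simp [extChar]

theorem tensorChar_apply_of_mem {Z U : Subgroup G} (hZU : Z ⊓ U = ⊥) (ν : Z →* ℂ)
    (φ : U →* ℂ) (z : Z) : tensorChar Z U ν φ z = ν z := by
  have hunique : ∀ p : Z × U, (p.1 : G) * p.2 = z ↔ p = (z, 1) := fun p => by
    rw [← (Subgroup.mul_injective_of_disjoint (disjoint_iff.mpr hZU)).eq_iff]
    simp
  simp only [tensorChar, ← Fintype.sum_prod_type', hunique, Fintype.sum_ite_eq', map_one,
    mul_one]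

end

/-- `⟨Ind_{ZU}^G(ν ⊗ φ), Ind_Z^G(ν')⟩_G` equals the index `[G : ZU]` if `ν = ν'`, and
equals `0` if `ν ≠ ν'`. -/
theorem stmt3 {G : Type*} [Group G] [Fintype G] (Z U : Subgroup G)
    (hZ : Z ≤ Subgroup.center G) (hZU : Z ⊓ U = ⊥)
    (ν ν' : Z →* ℂ) (φ : U →* ℂ) :
    innerSub ⊤ (indChar (Z ⊔ U) (tensorChar Z U ν φ)) (indChar Z (extChar Z ν')) =
      if ν = ν' then ((Z ⊔ U).index : ℂ) else 0 := by
  have hψ := indChar_apply_of_conj_invariant Z (extChar_conj hZ ν')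
  have hZU' : (Fintype.card (Z ⊔ U : Subgroup G) : ℂ) ≠ 0 :=
    Nat.cast_ne_zero.mpr Fintype.card_ne_zero
  calc _ = (Fintype.card (Z ⊔ U : Subgroup G) : ℂ)⁻¹ * Z.index *
        ∑ g, tensorChar Z U ν φ g * starRingEnd ℂ (extChar Z ν' g) := by
        rw [innerSub_top_indChar _ _ fun x g => by rw [hψ, hψ, extChar_conj hZ]]
        simp only [hψ, map_mul, map_natCast, mul_left_comm _ (Z.index : ℂ), ← Finset.mul_sum]
        ring
    _ = (Fintype.card (Z ⊔ U : Subgroup G) : ℂ)⁻¹ * Z.index *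
        if ν = ν' then (Fintype.card Z : ℂ) else 0 := by
        simp only [sum_mul_conj_extChar, tensorChar_apply_of_mem hZU, MonoidHom.sum_mul_conj]
    _ = _ := by
        split_ifs
        · rw [mul_assoc, cast_index_mul_card, ← cast_index_mul_card (Z ⊔ U)]
          field_simp
        · simp
end

section
/- For all linear characters φ, φ' of U and all linear characters ν, ν' of Z, one has ⟨Ind_{ZU}^G(ν⊗φ), Ind_{ZU}^G(ν⊗φ')⟩_G = ⟨Ind_{ZU}^G(ν'⊗φ), Ind_{ZU}^G(ν'⊗φ')⟩_G; that is, the inner product ⟨Ind_{ZU}^G(ν⊗φ), Ind_{ZU}^G(ν⊗φ')⟩_G does not depend on the linear character ν of Z. -/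
open scoped Classical

/-!
Expanding both inner products, it suffices to show that for all `g, t ∈ G` the product
`(ν ⊗ φ)(g) · conj ((ν ⊗ φ')(t g t⁻¹))` does not depend on `ν`. For `g = z u` in `ZU`,
centrality of `z` gives `t g t⁻¹ = z · (t u t⁻¹)`, so the product is
`|ν z|² · φ u · conj ((ν ⊗ φ')(t u t⁻¹))` with `|ν z|² = 1`. Finally `t u t⁻¹` has order
dividing `|U|`, and an element `z₁ u₁` of `ZU` with that property has `z₁ = 1` because `|Z|` and
`|U|` are coprime; hence `(ν ⊗ φ')(t u t⁻¹)` does not depend on `ν` either.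
-/

open ComplexConjugate

lemma MonoidHom.mul_conj_apply_eq_one {M : Type*} [Group M] [Finite M] (χ : M →* ℂ) (m : M) :
    χ m * conj (χ m) = 1 := by
  rw [Complex.mul_conj', (χ.isOfFinOrder (isOfFinOrder_of_finite m)).norm_eq_one]
  norm_num

section

variable {G : Type*} [Group G] [Fintype G] (Z U : Subgroup G)

lemma tensorChar_mul_apply (hZU : Z ⊓ U = ⊥) (ν : Z →* ℂ) (φ : U →* ℂ) (z : Z) (u : U) :
    tensorChar Z U ν φ (z * u) = ν z * φ u := by
  have hunique : ∀ (z' : Z) (u' : U), (z' : G) * u' = z * u → z' = z ∧ u' = u := by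
    intro z' u' h
    have hz : (z : G)⁻¹ * z' ∈ Z ⊓ U := by
      refine ⟨Z.mul_mem (Z.inv_mem z.2) z'.2, ?_⟩
      have : (z : G)⁻¹ * z' = u * (u' : G)⁻¹ := by
        rw [inv_mul_eq_iff_eq_mul, ← mul_assoc, ← h, mul_inv_cancel_right]
      exact this ▸ U.mul_mem u.2 (U.inv_mem u'.2)
    rw [hZU, Subgroup.mem_bot, inv_mul_eq_one] at hz
    obtain rfl : z' = z := (Subtype.ext hz).symm
    exact ⟨rfl, Subtype.ext (mul_left_cancel h)⟩
  unfold tensorChar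
  rw [Fintype.sum_eq_single z, Fintype.sum_eq_single u, if_pos rfl]
  · exact fun u' hu' => if_neg fun h => hu' (hunique z u' h).2
  · exact fun z' hz' => Finset.sum_eq_zero fun u' _ => if_neg fun h => hz' (hunique z' u' h).1

lemma tensorChar_eq_zero (ν : Z →* ℂ) (φ : U →* ℂ) {g : G}
    (h : ¬ ∃ (z : Z) (u : U), (z : G) * u = g) : tensorChar Z U ν φ g = 0 :=
  Finset.sum_eq_zero fun z _ => Finset.sum_eq_zero fun u _ => if_neg fun he => h ⟨z, u, he⟩

lemma tensorChar_mul_left (ν : Z →* ℂ) (φ : U →* ℂ) (z : Z) (g : G) :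
    tensorChar Z U ν φ (z * g) = ν z * tensorChar Z U ν φ g := by
  unfold tensorChar
  rw [Finset.mul_sum]
  refine (Fintype.sum_equiv (Equiv.mulLeft z) _ _ fun z' => ?_).symm
  rw [Finset.mul_sum]
  refine Finset.sum_congr rfl fun u _ => ?_
  simp only [Equiv.coe_mulLeft, Subgroup.coe_mul, map_mul, mul_assoc, mul_ite, mul_zero,
    mul_right_inj]

lemma eq_one_of_mul_pow_card_eq_one (hZ : Z ≤ Subgroup.center G)
    (hcop : Nat.Coprime (Fintype.card Z) (Fintype.card U)) (z : Z) (u : U)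
    (h : ((z : G) * u) ^ Fintype.card U = 1) : z = 1 := by
  have hcomm : Commute (z : G) u := Subgroup.mem_center_iff.mp (hZ z.2) u |>.symm
  have hz : z ^ Fintype.card U = 1 := by
    ext
    rwa [hcomm.mul_pow, ← SubmonoidClass.coe_pow u, pow_card_eq_one, OneMemClass.coe_one,
      mul_one] at h
  exact orderOf_eq_one_iff.mp
    (Nat.eq_one_of_dvd_coprimes hcop orderOf_dvd_card (orderOf_dvd_of_pow_eq_one hz))

lemma tensorChar_eq_of_pow_card_eq_one (hZ : Z ≤ Subgroup.center G) (hZU : Z ⊓ U = ⊥)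
    (hcop : Nat.Coprime (Fintype.card Z) (Fintype.card U)) (φ : U →* ℂ) (ν ν' : Z →* ℂ) {g : G}
    (hg : g ^ Fintype.card U = 1) : tensorChar Z U ν φ g = tensorChar Z U ν' φ g := by
  by_cases h : ∃ (z : Z) (u : U), (z : G) * u = g
  · obtain ⟨z, u, rfl⟩ := h
    obtain rfl := eq_one_of_mul_pow_card_eq_one Z U hZ hcop z u hg
    rw [tensorChar_mul_apply Z U hZU, tensorChar_mul_apply Z U hZU, map_one, map_one]
  · rw [tensorChar_eq_zero Z U ν φ h, tensorChar_eq_zero Z U ν' φ h]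

lemma tensorChar_mul_conj_tensorChar_conj (hZ : Z ≤ Subgroup.center G) (hZU : Z ⊓ U = ⊥)
    (hcop : Nat.Coprime (Fintype.card Z) (Fintype.card U))
    (φ φ' : U →* ℂ) (ν ν' : Z →* ℂ) (g t : G) :
    tensorChar Z U ν φ g * conj (tensorChar Z U ν φ' (t * g * t⁻¹)) =
      tensorChar Z U ν' φ g * conj (tensorChar Z U ν' φ' (t * g * t⁻¹)) := by
  by_cases h : ∃ (z : Z) (u : U), (z : G) * u = g
  · obtain ⟨z, u, rfl⟩ := h
    have hconj : t * (z * u) * t⁻¹ = z * (t * u * t⁻¹) := by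
      rw [← mul_assoc, Subgroup.mem_center_iff.mp (hZ z.2) t, mul_assoc, mul_assoc, mul_assoc]
    have hu : (t * u * t⁻¹) ^ Fintype.card U = 1 := by
      rw [conj_pow, ← SubmonoidClass.coe_pow u, pow_card_eq_one, OneMemClass.coe_one, mul_one,
        mul_inv_cancel]
    rw [hconj, tensorChar_mul_apply Z U hZU, tensorChar_mul_apply Z U hZU, tensorChar_mul_left,
      tensorChar_mul_left, tensorChar_eq_of_pow_card_eq_one Z U hZ hZU hcop φ' ν ν' hu, map_mul,
      map_mul]
    linear_combination φ u * conj (tensorChar Z U ν' φ' (t * u * t⁻¹)) *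
      (ν.mul_conj_apply_eq_one z - ν'.mul_conj_apply_eq_one z)
  · rw [tensorChar_eq_zero Z U ν φ h, tensorChar_eq_zero Z U ν' φ h, zero_mul, zero_mul]

end

lemma innerSub_indChar_congr {G : Type*} [Group G] [Fintype G] (H K : Subgroup G)
    {f f' g g' : G → ℂ}
    (h : ∀ a t, f a * conj (f' (t * a * t⁻¹)) = g a * conj (g' (t * a * t⁻¹))) :
    innerSub H (indChar K f) (indChar K f') = innerSub H (indChar K g) (indChar K g') := by
  have hsum (x : G) : (∑ a : G, f (a * x * a⁻¹)) * conj (∑ b : G, f' (b * x * b⁻¹)) =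
      (∑ a : G, g (a * x * a⁻¹)) * conj (∑ b : G, g' (b * x * b⁻¹)) := by
    simp only [map_sum, Finset.sum_mul_sum]
    refine Finset.sum_congr rfl fun a _ => Finset.sum_congr rfl fun b _ => ?_
    have hba : b * a⁻¹ * (a * x * a⁻¹) * (b * a⁻¹)⁻¹ = b * x * b⁻¹ := by group
    simpa only [hba] using h (a * x * a⁻¹) (b * a⁻¹)
  unfold innerSub indChar
  congr 1
  refine Finset.sum_congr rfl fun x _ => ?_
  rw [map_mul, map_mul, mul_mul_mul_comm, hsum, mul_mul_mul_comm]

/-- The inner product `⟨Ind_{ZU}^G(ν ⊗ φ), Ind_{ZU}^G(ν ⊗ φ')⟩_G` does not depend on the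
linear character `ν` of `Z`. -/
theorem stmt4 {G : Type*} [Group G] [Fintype G] (Z U : Subgroup G)
    (hZ : Z ≤ Subgroup.center G) (hZU : Z ⊓ U = ⊥)
    (hcop : Nat.Coprime (Fintype.card Z) (Fintype.card U))
    (φ φ' : U →* ℂ) (ν ν' : Z →* ℂ) :
    innerSub ⊤ (indChar (Z ⊔ U) (tensorChar Z U ν φ)) (indChar (Z ⊔ U) (tensorChar Z U ν φ')) =
      innerSub ⊤ (indChar (Z ⊔ U) (tensorChar Z U ν' φ))
        (indChar (Z ⊔ U) (tensorChar Z U ν' φ')) :=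
  innerSub_indChar_congr ⊤ (Z ⊔ U)
    (tensorChar_mul_conj_tensorChar_conj Z U hZ hZU hcop φ φ' ν ν')
end

section
/- For all linear characters φ, φ' of U and every linear character ν of Z, one has ⟨Ind_{ZU}^G(ν⊗φ), Ind_{ZU}^G(ν⊗φ')⟩_G = (1/|Z|)·⟨Ind_U^G(φ), Ind_U^G(φ')⟩_G. -/
open scoped Classical

/-!
Expanding the induced characters gives
`⟨Ind_H f, Ind_H f'⟩_G = |H|⁻² · Σ_{t, h ∈ G} f h · conj (f' (t h t⁻¹))`.
For `h ∈ U` the conjugate `w = t h t⁻¹` satisfies `w ^ |U| = 1`; if `z' u = z w` with `z, z' ∈ Z`,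
`u ∈ U`, then the central element `z⁻¹ z'` has order dividing both `|Z|` and `|U|`, so it is `1`.
Hence `(ν ⊗ φ')(z w) = ν z · φ'(w)`, and after substituting `h ↦ z h` the sum over `z ∈ Z` of
`ν z · conj (ν z) = 1` contributes a factor `|Z|`, against `|ZU|² = |Z|² |U|²` in front.
-/

open ComplexConjugate

section CentralProduct

variable {G : Type*} [Group G]

theorem Subgroup.normal_of_le_center {Z : Subgroup G} (hZ : Z ≤ Subgroup.center G) : Z.Normal :=
  ⟨fun n hn g => by rwa [Subgroup.mem_center_iff.1 (hZ hn) g, mul_inv_cancel_right]⟩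

theorem Subgroup.card_sup_of_normal_of_disjoint (Z U : Subgroup G) [Z.Normal] (h : Disjoint Z U) :
    Nat.card ↥(Z ⊔ U) = Nat.card Z * Nat.card U := by
  rw [← relIndex_bot_left, ← relIndex_mul_relIndex ⊥ Z (Z ⊔ U) bot_le le_sup_left,
    relIndex_sup_left, ← inf_relIndex_right Z U, disjoint_iff.1 h, relIndex_bot_left,
    relIndex_bot_left]

theorem Subgroup.pow_natCard_eq_one_of_mem {U : Subgroup G} {u : G} (hu : u ∈ U) :
    u ^ Nat.card U = 1 := by
  rw [← Subgroup.coe_mk U u hu, ← Subgroup.coe_pow, pow_card_eq_one', Subgroup.coe_one]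

theorem eq_one_of_mem_of_pow_eq_one_of_coprime {Z : Subgroup G} {n : ℕ}
    (hn : Nat.Coprime (Nat.card Z) n) {c : G} (hc : c ∈ Z) (hcn : c ^ n = 1) : c = 1 :=
  orderOf_eq_one_iff.1 <| Nat.eq_one_of_dvd_coprimes hn
    (Subgroup.orderOf_coe (⟨c, hc⟩ : Z) ▸ orderOf_dvd_natCard _) (orderOf_dvd_of_pow_eq_one hcn)

theorem eq_one_of_mul_mem_of_pow_card_eq_one {Z U : Subgroup G} (hZ : Z ≤ Subgroup.center G)
    (hcop : Nat.Coprime (Nat.card Z) (Nat.card U)) {c w : G} (hc : c ∈ Z)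
    (hw : w ^ Nat.card U = 1) (hcw : c * w ∈ U) : c = 1 := by
  refine eq_one_of_mem_of_pow_eq_one_of_coprime hcop hc ?_
  have hcomm : Commute c w := (Subgroup.mem_center_iff.1 (hZ hc) w).symm
  have hpow := Subgroup.pow_natCard_eq_one_of_mem hcw
  rwa [hcomm.mul_pow, hw, mul_one] at hpow

end CentralProduct

section Characters

variable {G : Type*} [Group G] [Fintype G]

theorem mul_conj_map_eq_one {H : Type*} [Group H] [Finite H] (ν : H →* ℂ) (z : H) :
    ν z * conj (ν z) = 1 := by
  have hpow : ν z ^ Nat.card H = 1 := by rw [← map_pow, pow_card_eq_one', map_one]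
  rw [Complex.mul_conj', Complex.norm_eq_one_of_pow_eq_one hpow Nat.card_pos.ne',
    Complex.ofReal_one, one_pow]

theorem sum_ite_coe_eq {M : Type*} [AddCommMonoid M] (H : Subgroup G) (f : H → M) (g : G) :
    (∑ u : H, if (u : G) = g then f u else 0) = if h : g ∈ H then f ⟨g, h⟩ else 0 := by
  split_ifs with hg
  · rw [Fintype.sum_eq_single ⟨g, hg⟩ fun u hu => if_neg fun h => hu (Subtype.ext h), if_pos rfl]
  · exact Finset.sum_eq_zero fun u _ => if_neg fun (h : (u : G) = g) => hg (h ▸ u.2)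

theorem tensorChar_eq_sum (Z U : Subgroup G) (ν : Z →* ℂ) (φ : U →* ℂ) (g : G) :
    tensorChar Z U ν φ g = ∑ z : Z, ν z * extChar U φ ((z : G)⁻¹ * g) := by
  refine Finset.sum_congr rfl fun z _ => ?_
  rw [extChar, ← sum_ite_coe_eq U φ, Finset.mul_sum]
  refine Finset.sum_congr rfl fun u _ => ?_
  rw [mul_ite, mul_zero, eq_inv_mul_iff_mul_eq]

theorem tensorChar_central_mul {Z U : Subgroup G} (hZ : Z ≤ Subgroup.center G)
    (hcop : Nat.Coprime (Nat.card Z) (Nat.card U)) (ν : Z →* ℂ) (φ : U →* ℂ) (z : Z) {w : G}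
    (hw : w ^ Nat.card U = 1) : tensorChar Z U ν φ (z * w) = ν z * extChar U φ w := by
  rw [tensorChar_eq_sum, Fintype.sum_eq_single z fun z' hz' => ?_, inv_mul_cancel_left]
  rw [extChar, dif_neg, mul_zero]
  intro hmem
  have hz'z : ((z'⁻¹ * z : Z) : G) = 1 :=
    eq_one_of_mul_mem_of_pow_card_eq_one hZ hcop (z'⁻¹ * z).2 hw (by simpa [mul_assoc] using hmem)
  exact hz' (inv_mul_eq_one.1 (Subtype.ext hz'z))

theorem sum_tensorChar_mul_conj_tensorChar_conj {Z U : Subgroup G} (hZ : Z ≤ Subgroup.center G)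
    (hcop : Nat.Coprime (Nat.card Z) (Nat.card U)) (ν : Z →* ℂ) (φ φ' : U →* ℂ) (t : G) :
    ∑ h, tensorChar Z U ν φ h * conj (tensorChar Z U ν φ' (t * h * t⁻¹)) =
      Nat.card Z * ∑ h, extChar U φ h * conj (extChar U φ' (t * h * t⁻¹)) := by
  have hterm : ∀ (z : Z) (h : G), extChar U φ h * conj (tensorChar Z U ν φ' (t * (z * h) * t⁻¹))
      = conj (ν z) * (extChar U φ h * conj (extChar U φ' (t * h * t⁻¹))) := by
    intro z h
    by_cases hh : h ∈ U
    · have hw : (t * h * t⁻¹) ^ Nat.card U = 1 := by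
        rw [conj_pow, Subgroup.pow_natCard_eq_one_of_mem hh, mul_one, mul_inv_cancel]
      have hcen : t * (z * h) * t⁻¹ = z * (t * h * t⁻¹) := by
        rw [← mul_assoc t, Subgroup.mem_center_iff.1 (hZ z.2) t, mul_assoc, mul_assoc, mul_assoc]
      rw [hcen, tensorChar_central_mul hZ hcop ν φ' z hw, map_mul]
      ring
    · simp [extChar, hh]
  calc ∑ h, tensorChar Z U ν φ h * conj (tensorChar Z U ν φ' (t * h * t⁻¹))
      = ∑ z : Z, ν z *
          ∑ h, extChar U φ ((z : G)⁻¹ * h) * conj (tensorChar Z U ν φ' (t * h * t⁻¹)) := by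
        simp only [tensorChar_eq_sum Z U ν φ, Finset.sum_mul, mul_assoc]
        rw [Finset.sum_comm]
        simp only [← Finset.mul_sum]
    _ = ∑ z : Z, ν z * ∑ h, extChar U φ h * conj (tensorChar Z U ν φ' (t * (z * h) * t⁻¹)) := by
        refine Finset.sum_congr rfl fun z _ => congrArg _ ?_
        rw [← Equiv.sum_comp (Equiv.mulLeft (z : G))]
        simp only [Equiv.coe_mulLeft, inv_mul_cancel_left]
    _ = ∑ z : Z, ν z * conj (ν z) * ∑ h, extChar U φ h * conj (extChar U φ' (t * h * t⁻¹)) := by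
        simp_rw [hterm, ← Finset.mul_sum, mul_assoc]
    _ = Nat.card Z * ∑ h, extChar U φ h * conj (extChar U φ' (t * h * t⁻¹)) := by
        simp_rw [mul_conj_map_eq_one, one_mul, Finset.sum_const, Finset.card_univ, nsmul_eq_mul,
          Nat.card_eq_fintype_card]

theorem innerSub_top (α β : G → ℂ) :
    innerSub ⊤ α β = (Fintype.card G : ℂ)⁻¹ * ∑ g, α g * conj (β g) := by
  rw [innerSub, Fintype.card_congr Subgroup.topEquiv.toEquiv,
    Fintype.sum_equiv Subgroup.topEquiv.toEquiv (fun x => α x * conj (β x))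
      (fun g => α g * conj (β g)) fun _ => rfl]

theorem sum_conjugates_mul_conj_sum_conjugates (f f' : G → ℂ) :
    ∑ g, (∑ x, f (x * g * x⁻¹)) * conj (∑ y, f' (y * g * y⁻¹)) =
      Fintype.card G * ∑ t, ∑ h, f h * conj (f' (t * h * t⁻¹)) := by
  have hx : ∀ x : G, ∑ g, ∑ y, f (x * g * x⁻¹) * conj (f' (y * g * y⁻¹)) =
      ∑ t, ∑ h, f h * conj (f' (t * h * t⁻¹)) := by
    intro x
    rw [Finset.sum_comm]
    refine Fintype.sum_equiv (Equiv.mulRight x⁻¹) _ _ fun y => ?_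
    refine Fintype.sum_equiv (MulAut.conj x).toEquiv _ _ fun g => ?_
    simp only [Equiv.coe_mulRight, MulEquiv.toEquiv_eq_coe, MulEquiv.coe_toEquiv, MulAut.conj_apply]
    congr 3
    group
  calc ∑ g, (∑ x, f (x * g * x⁻¹)) * conj (∑ y, f' (y * g * y⁻¹))
      = ∑ x, ∑ g, ∑ y, f (x * g * x⁻¹) * conj (f' (y * g * y⁻¹)) := by
        simp only [map_sum, Finset.sum_mul_sum]
        exact Finset.sum_comm
    _ = Fintype.card G * ∑ t, ∑ h, f h * conj (f' (t * h * t⁻¹)) := by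
        rw [Finset.sum_congr rfl fun x _ => hx x, Finset.sum_const, Finset.card_univ, nsmul_eq_mul]

theorem innerSub_top_indChar_s5 (H : Subgroup G) (f f' : G → ℂ) :
    innerSub ⊤ (indChar H f) (indChar H f') =
      ((Fintype.card H : ℂ) ^ 2)⁻¹ * ∑ t, ∑ h, f h * conj (f' (t * h * t⁻¹)) := by
  simp only [innerSub_top, indChar, map_mul, map_inv₀, map_natCast, mul_mul_mul_comm,
    ← Finset.mul_sum, sum_conjugates_mul_conj_sum_conjugates]
  field_simp

end Characters

theorem stmt5_general {G : Type*} [Group G] [Fintype G] (Z U : Subgroup G)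
    (hZ : Z ≤ Subgroup.center G)
    (hcop : Nat.Coprime (Fintype.card Z) (Fintype.card U))
    (φ φ' : U →* ℂ) (ν : Z →* ℂ) :
    innerSub ⊤ (indChar (Z ⊔ U) (tensorChar Z U ν φ)) (indChar (Z ⊔ U) (tensorChar Z U ν φ')) =
      (Fintype.card Z : ℂ)⁻¹ *
        innerSub ⊤ (indChar U (extChar U φ)) (indChar U (extChar U φ')) := by
  have hcop' : Nat.Coprime (Nat.card Z) (Nat.card U) := by
    simpa only [Nat.card_eq_fintype_card] using hcop
  have : Z.Normal := Subgroup.normal_of_le_center hZ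
  have hcard : Fintype.card ↥(Z ⊔ U) = Fintype.card Z * Fintype.card U := by
    simpa only [Nat.card_eq_fintype_card] using
      Subgroup.card_sup_of_normal_of_disjoint Z U (Subgroup.disjoint_of_coprime_natCard hcop')
  simp only [innerSub_top_indChar_s5, hcard, sum_tensorChar_mul_conj_tensorChar_conj hZ hcop',
    ← Finset.mul_sum, Nat.card_eq_fintype_card, Nat.cast_mul]
  field_simp

/-- `⟨Ind_{ZU}^G(ν ⊗ φ), Ind_{ZU}^G(ν ⊗ φ')⟩_G = (1/|Z|) * ⟨Ind_U^G(φ), Ind_U^G(φ')⟩_G`. -/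
theorem stmt5 {G : Type*} [Group G] [Fintype G] (Z U : Subgroup G)
    (hZ : Z ≤ Subgroup.center G) (hZU : Z ⊓ U = ⊥)
    (hcop : Nat.Coprime (Fintype.card Z) (Fintype.card U))
    (φ φ' : U →* ℂ) (ν : Z →* ℂ) :
    innerSub ⊤ (indChar (Z ⊔ U) (tensorChar Z U ν φ)) (indChar (Z ⊔ U) (tensorChar Z U ν φ')) =
      (Fintype.card Z : ℂ)⁻¹ *
        innerSub ⊤ (indChar U (extChar U φ)) (indChar U (extChar U φ')) :=
  stmt5_general Z U hZ hcop φ φ' ν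
end

section
/- Let R be a set of representatives of the (ZU, U)-double cosets in G. For every linear character ν of Z and all linear characters φ, φ' of U, one has ⟨Ind_{ZU}^G(ν⊗φ), Ind_U^G(φ')⟩_G = Σ_{r ∈ R} ⟨Ind_{rUr⁻¹ ∩ U}^U({}^rφ), φ'⟩_U, where {}^rφ is the linear character of rUr⁻¹ defined by ({}^rφ)(x) = φ(r⁻¹xr). In particular this inner product does not depend on ν. -/
open scoped Classical

/-- Induction, from a subgroup `H` to an intermediate subgroup `K` (with `H ≤ K`), of a class
function `f` of `H` extended by zero to `G`. -/
noncomputable def indCharIn {G : Type*} [Group G] [Fintype G] (K H : Subgroup G)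
    (f : G → ℂ) : G → ℂ :=
  fun g => (Fintype.card H : ℂ)⁻¹ * ∑ x : K, f ((x : G) * g * (x : G)⁻¹)

/-- The conjugate `{}^rφ` of a linear character `φ` of `U`: the linear character of `rUr⁻¹`
given by `({}^rφ)(x) = φ(r⁻¹ x r)`, extended by zero to `G`. -/
noncomputable def conjChar {G : Type*} [Group G] (r : G) (U : Subgroup G) (φ : U →* ℂ) :
    G → ℂ :=
  fun g => if h : r⁻¹ * g * r ∈ U then φ ⟨r⁻¹ * g * r, h⟩ else 0

/-- The conjugate subgroup `rUr⁻¹`. -/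
def conjSub {G : Type*} [Group G] (r : G) (U : Subgroup G) : Subgroup G :=
  U.map (MulAut.conj r).toMonoidHom

/-- The restriction of `f : G → ℂ` to the subgroup `H`, extended by zero off `H`. -/
noncomputable def restrictTo {G : Type*} [Group G] (H : Subgroup G) (f : G → ℂ) : G → ℂ :=
  fun g => if g ∈ H then f g else 0

section Aux

open Finset Pointwise
set_option linter.unusedSectionVars false

variable {G : Type*} [Group G] [Fintype G]

lemma aux_pow_card (U : Subgroup G) {g : G} (hg : g ∈ U) : g ^ Fintype.card U = 1 := by
  have h : (⟨g, hg⟩ : U) ^ Fintype.card U = 1 := pow_card_eq_one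
  have := congrArg (Subtype.val) h
  rwa [SubmonoidClass.coe_pow, OneMemClass.coe_one] at this

lemma aux_z_eq_one (Z U : Subgroup G) (hZ : Z ≤ Subgroup.center G)
    (hcop : Nat.Coprime (Fintype.card Z) (Fintype.card U)) {z w : G} (hz : z ∈ Z)
    (hw : w ^ Fintype.card U = 1) (hzw : (z * w) ^ Fintype.card U = 1) : z = 1 := by
  have hc : Commute z w := (Subgroup.mem_center_iff.mp (hZ hz) w).symm
  have h1 : z ^ Fintype.card U * w ^ Fintype.card U = 1 := by rw [← hc.mul_pow]; exact hzw
  have h2 : z ^ Fintype.card U = 1 := by rwa [hw, mul_one] at h1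
  have h5 : orderOf z ∣ 1 := hcop ▸ Nat.dvd_gcd
    (orderOf_dvd_of_pow_eq_one (aux_pow_card Z hz)) (orderOf_dvd_of_pow_eq_one h2)
  rw [← orderOf_eq_one_iff]
  exact Nat.dvd_one.mp h5

lemma aux_decomp (Z U : Subgroup G) (hZ : Z ≤ Subgroup.center G) {a : G} (ha : a ∈ Z ⊔ U) :
    ∃ z ∈ Z, ∃ u ∈ U, a = z * u := by
  haveI : Z.Normal := ⟨fun n hn g => by
    rw [Subgroup.mem_center_iff.mp (hZ hn) g, mul_assoc, mul_inv_cancel, mul_one]; exact hn⟩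
  have ha' : a ∈ (Z : Set G) * (U : Set G) := by
    rw [← Subgroup.normal_mul Z U]; exact ha
  obtain ⟨z, hz, u, hu, rfl⟩ := ha'
  exact ⟨z, hz, u, hu, rfl⟩

lemma hom_conj {H : Subgroup G} (ψ : H →* ℂ) (x v : H) : ψ (x * v * x⁻¹) = ψ v := by
  rw [map_mul, map_mul, mul_comm (ψ x), mul_assoc, ← map_mul, mul_inv_cancel, map_one, mul_one]

lemma hom_conj' {H : Subgroup G} (ψ : H →* ℂ) (x v : H) : ψ (x⁻¹ * v * x) = ψ v := by
  simpa using hom_conj ψ x⁻¹ v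

lemma extChar_mem {H : Subgroup G} (ψ : H →* ℂ) {g : G} (hg : g ∈ H) :
    extChar H ψ g = ψ ⟨g, hg⟩ := dif_pos hg

lemma extChar_coe {H : Subgroup G} (ψ : H →* ℂ) (v : H) : extChar H ψ v = ψ v := dif_pos v.2

lemma extChar_not_mem {H : Subgroup G} (ψ : H →* ℂ) {g : G} (h : g ∉ H) :
    extChar H ψ g = 0 := dif_neg h

lemma extChar_conj_s6 {U : Subgroup G} (φ : U →* ℂ) {u : G} (hu : u ∈ U) (g : G) :
    extChar U φ (u⁻¹ * g * u) = extChar U φ g := by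
  by_cases hg : g ∈ U
  · have h2 : u⁻¹ * g * u ∈ U := mul_mem (mul_mem (inv_mem hu) hg) hu
    unfold extChar
    rw [dif_pos h2, dif_pos hg]
    have : (⟨u⁻¹ * g * u, h2⟩ : U) = (⟨u, hu⟩ : U)⁻¹ * ⟨g, hg⟩ * ⟨u, hu⟩ := by
      apply Subtype.ext; rfl
    rw [this, hom_conj']
  · have h2 : u⁻¹ * g * u ∉ U := by
      intro h; apply hg
      have := mul_mem (mul_mem hu h) (inv_mem hu)
      simpa [mul_assoc] using this
    unfold extChar
    rw [dif_neg h2, dif_neg hg]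

lemma extChar_eq_sum {H : Subgroup G} (ψ : H →* ℂ) (g : G) :
    extChar H ψ g = ∑ w : H, if (w : G) = g then ψ w else 0 := by
  by_cases hg : g ∈ H
  · rw [Fintype.sum_eq_single (⟨g, hg⟩ : H), if_pos rfl]
    · exact (dif_pos hg)
    · intro b hb
      rw [if_neg]
      intro hc; exact hb (Subtype.ext hc)
  · rw [extChar_not_mem ψ hg]
    rw [eq_comm]
    apply Finset.sum_eq_zero
    intro w _
    rw [if_neg]; intro hc; exact hg (hc ▸ w.2)

lemma mem_conjSub {U : Subgroup G} {r w : G} : w ∈ conjSub r U ↔ r⁻¹ * w * r ∈ U := by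
  constructor
  · rintro ⟨u, hu, rfl⟩
    simpa [mul_assoc] using hu
  · intro h
    exact ⟨r⁻¹ * w * r, h, by simp [mul_assoc]⟩

lemma aux_key (Z U : Subgroup G) (hZ : Z ≤ Subgroup.center G)
    (hcop : Nat.Coprime (Fintype.card Z) (Fintype.card U)) {s h : G} (hs : s * h * s⁻¹ ∈ U)
    {z : Z} {u : U} (he : (z : G) * (u : G) = h) : (z : G) = 1 := by
  have hzc := Subgroup.mem_center_iff.mp (hZ z.2)
  have hw : (s * (u : G) * s⁻¹) ^ Fintype.card U = 1 := by
    have h1 : s * (u : G) * s⁻¹ = MulAut.conj s (u : G) := rfl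
    rw [h1, ← map_pow, aux_pow_card U u.2, map_one]
  have heq : (z : G) * (s * (u : G) * s⁻¹) = s * h * s⁻¹ := by
    rw [← he, ← mul_assoc, ← mul_assoc, ← mul_assoc, ← hzc s]
  have hzw : ((z : G) * (s * (u : G) * s⁻¹)) ^ Fintype.card U = 1 := by
    rw [heq]; exact aux_pow_card U hs
  exact aux_z_eq_one Z U hZ hcop z.2 hw hzw

lemma tensor_eq (Z U : Subgroup G) (hZ : Z ≤ Subgroup.center G)
    (hcop : Nat.Coprime (Fintype.card Z) (Fintype.card U))
    (ν : Z →* ℂ) (φ : U →* ℂ) {s h : G} (hs : s * h * s⁻¹ ∈ U) :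
    tensorChar Z U ν φ h = extChar U φ h := by
  unfold tensorChar
  by_cases hU : h ∈ U
  · rw [extChar_mem φ hU]
    rw [Fintype.sum_eq_single (1 : Z)]
    · rw [Fintype.sum_eq_single (⟨h, hU⟩ : U)]
      · simp
      · intro b hb
        rw [if_neg]
        simp only [OneMemClass.coe_one, one_mul]
        intro hc; exact hb (Subtype.ext hc)
    · intro z hz
      apply Finset.sum_eq_zero
      intro u _
      rw [if_neg]
      intro hc
      exact hz (Subtype.ext (aux_key Z U hZ hcop hs hc))
  · rw [extChar_not_mem φ hU]
    apply Finset.sum_eq_zero; intro z _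
    apply Finset.sum_eq_zero; intro u _
    rw [if_neg]
    intro hc
    have hz1 : (z : G) = 1 := aux_key Z U hZ hcop hs hc
    rw [hz1, one_mul] at hc
    exact hU (hc ▸ u.2)

lemma tensor_mul (Z U : Subgroup G) (hZ : Z ≤ Subgroup.center G)
    (hcop : Nat.Coprime (Fintype.card Z) (Fintype.card U))
    (ν : Z →* ℂ) (φ φ' : U →* ℂ) (s h : G) :
    tensorChar Z U ν φ h * (starRingEnd ℂ) (extChar U φ' (s * h * s⁻¹)) =
      extChar U φ h * (starRingEnd ℂ) (extChar U φ' (s * h * s⁻¹)) := by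
  by_cases hs : s * h * s⁻¹ ∈ U
  · rw [tensor_eq Z U hZ hcop ν φ hs]
  · rw [extChar_not_mem φ' hs, map_zero, mul_zero, mul_zero]

/-- The function `E`: `E r = Σ_{v ∈ U} φ(r⁻¹ v r) conj (φ' v)` (with `φ` extended by zero). -/
noncomputable def Efun (U : Subgroup G) (φ φ' : U →* ℂ) (r : G) : ℂ :=
  ∑ v : U, extChar U φ (r⁻¹ * (v : G) * r) * (starRingEnd ℂ) (φ' v)

/-- The function `D`: `D s = Σ_{v ∈ U} φ(v) conj (φ'(s v s⁻¹))` (with `φ'` extended by zero). -/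
noncomputable def Dfun (U : Subgroup G) (φ φ' : U →* ℂ) (s : G) : ℂ :=
  ∑ v : U, φ v * (starRingEnd ℂ) (extChar U φ' (s * (v : G) * s⁻¹))

lemma sum_over_subgroup (H : Subgroup G) (f : G → ℂ) :
    ∑ g : G, (if g ∈ H then f g else 0) = ∑ h : H, f h := by
  rw [← Finset.sum_filter]
  exact Finset.sum_subtype _ (by simp) f

lemma sum_extChar_mul (H : Subgroup G) (ψ : H →* ℂ) (c : G → ℂ) :
    ∑ g : G, extChar H ψ g * c g = ∑ v : H, ψ v * c v := by
  calc ∑ g : G, extChar H ψ g * c g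
      = ∑ g : G, (if g ∈ H then extChar H ψ g * c g else 0) := by
        apply Finset.sum_congr rfl
        intro g _
        by_cases hg : g ∈ H
        · rw [if_pos hg]
        · rw [if_neg hg, extChar_not_mem ψ hg, zero_mul]
    _ = ∑ v : H, extChar H ψ (v : G) * c v := sum_over_subgroup H _
    _ = ∑ v : H, ψ v * c v := by
        apply Finset.sum_congr rfl
        intro v _
        rw [extChar_coe]

lemma triple_sum (f c : G → ℂ) :
    ∑ g : G, ∑ x : G, ∑ y : G, f (x * g * x⁻¹) * c (y * g * y⁻¹) =
      (Fintype.card G : ℂ) * ∑ h : G, ∑ s : G, f h * c (s * h * s⁻¹) := by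
  rw [Finset.sum_comm]
  have key : ∀ x : G, ∑ g : G, ∑ y : G, f (x * g * x⁻¹) * c (y * g * y⁻¹) =
      ∑ h : G, ∑ s : G, f h * c (s * h * s⁻¹) := by
    intro x
    have h1 : ∀ g : G, ∑ y : G, f (x * g * x⁻¹) * c (y * g * y⁻¹) =
        ∑ s : G, f (x * g * x⁻¹) * c (s * (x * g * x⁻¹) * s⁻¹) := by
      intro g
      refine (Fintype.sum_equiv (Equiv.mulRight x) _ _ (fun s => ?_)).symm
      simp only [Equiv.coe_mulRight]
      congr 1
      group
    calc ∑ g : G, ∑ y : G, f (x * g * x⁻¹) * c (y * g * y⁻¹)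
        = ∑ g : G, ∑ s : G, f (x * g * x⁻¹) * c (s * (x * g * x⁻¹) * s⁻¹) :=
          Finset.sum_congr rfl (fun g _ => h1 g)
      _ = ∑ h : G, ∑ s : G, f h * c (s * h * s⁻¹) := by
          apply Fintype.sum_equiv (MulAut.conj x).toEquiv
          intro g
          rfl
  calc ∑ x : G, ∑ g : G, ∑ y : G, f (x * g * x⁻¹) * c (y * g * y⁻¹)
      = ∑ _x : G, ∑ h : G, ∑ s : G, f h * c (s * h * s⁻¹) :=
        Finset.sum_congr rfl (fun x _ => key x)
    _ = (Fintype.card G : ℂ) * ∑ h : G, ∑ s : G, f h * c (s * h * s⁻¹) := by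
        rw [Finset.sum_const, Finset.card_univ, nsmul_eq_mul]

lemma lhs_eval (Z U : Subgroup G) (hZ : Z ≤ Subgroup.center G)
    (hcop : Nat.Coprime (Fintype.card Z) (Fintype.card U))
    (ν : Z →* ℂ) (φ φ' : U →* ℂ) :
    innerSub ⊤ (indChar (Z ⊔ U) (tensorChar Z U ν φ)) (indChar U (extChar U φ')) =
      (Fintype.card ↥(Z ⊔ U) : ℂ)⁻¹ * (Fintype.card U : ℂ)⁻¹ * ∑ s : G, Dfun U φ φ' s := by
  have hGne : (Fintype.card G : ℂ) ≠ 0 := Nat.cast_ne_zero.mpr Fintype.card_ne_zero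
  have hct : Fintype.card (⊤ : Subgroup G) = Fintype.card G :=
    Fintype.card_congr Subgroup.topEquiv.toEquiv
  unfold innerSub indChar
  rw [hct]
  rw [Fintype.sum_equiv Subgroup.topEquiv.toEquiv
    (fun x : (⊤ : Subgroup G) =>
      ((Fintype.card ↥(Z ⊔ U) : ℂ)⁻¹ * ∑ y : G, tensorChar Z U ν φ (y * (x : G) * y⁻¹)) *
        (starRingEnd ℂ) ((Fintype.card ↥U : ℂ)⁻¹ * ∑ y : G, extChar U φ' (y * (x : G) * y⁻¹)))
    (fun g : G =>
      ((Fintype.card ↥(Z ⊔ U) : ℂ)⁻¹ * ∑ y : G, tensorChar Z U ν φ (y * g * y⁻¹)) *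
        (starRingEnd ℂ) ((Fintype.card ↥U : ℂ)⁻¹ * ∑ y : G, extChar U φ' (y * g * y⁻¹)))
    (fun x => rfl)]
  have hpt : ∀ g : G,
      ((Fintype.card ↥(Z ⊔ U) : ℂ)⁻¹ * ∑ y : G, tensorChar Z U ν φ (y * g * y⁻¹)) *
        (starRingEnd ℂ) ((Fintype.card ↥U : ℂ)⁻¹ * ∑ y : G, extChar U φ' (y * g * y⁻¹)) =
      ((Fintype.card ↥(Z ⊔ U) : ℂ)⁻¹ * (Fintype.card ↥U : ℂ)⁻¹) *
        ∑ x : G, ∑ y : G,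
          tensorChar Z U ν φ (x * g * x⁻¹) *
            (starRingEnd ℂ) (extChar U φ' (y * g * y⁻¹)) := by
    intro g
    rw [map_mul, map_inv₀, map_natCast, map_sum, mul_mul_mul_comm, Finset.sum_mul_sum]
  rw [Finset.sum_congr rfl (fun g _ => hpt g), ← Finset.mul_sum]
  rw [triple_sum (tensorChar Z U ν φ) (fun w => (starRingEnd ℂ) (extChar U φ' w))]
  have hrepl : ∑ h : G, ∑ s : G,
      tensorChar Z U ν φ h * (starRingEnd ℂ) (extChar U φ' (s * h * s⁻¹)) =
      ∑ s : G, Dfun U φ φ' s := by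
    calc ∑ h : G, ∑ s : G,
        tensorChar Z U ν φ h * (starRingEnd ℂ) (extChar U φ' (s * h * s⁻¹))
        = ∑ h : G, ∑ s : G,
          extChar U φ h * (starRingEnd ℂ) (extChar U φ' (s * h * s⁻¹)) :=
          Finset.sum_congr rfl (fun h _ => Finset.sum_congr rfl
            (fun s _ => tensor_mul Z U hZ hcop ν φ φ' s h))
      _ = ∑ s : G, ∑ h : G,
          extChar U φ h * (starRingEnd ℂ) (extChar U φ' (s * h * s⁻¹)) := Finset.sum_comm
      _ = ∑ s : G, Dfun U φ φ' s := by
          apply Finset.sum_congr rfl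
          intro s _
          exact sum_extChar_mul U φ (fun h => (starRingEnd ℂ) (extChar U φ' (s * h * s⁻¹)))
  rw [hrepl]
  field_simp

lemma D_eq_E (U : Subgroup G) (φ φ' : U →* ℂ) (s : G) : Dfun U φ φ' s = Efun U φ φ' s := by
  have hD : Dfun U φ φ' s = ∑ v : U, ∑ w : U,
      if (w : G) = s * (v : G) * s⁻¹ then φ v * (starRingEnd ℂ) (φ' w) else 0 := by
    apply Finset.sum_congr rfl
    intro v _
    rw [extChar_eq_sum, map_sum, Finset.mul_sum]
    apply Finset.sum_congr rfl
    intro w _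
    split_ifs with h
    · rfl
    · rw [map_zero, mul_zero]
  have hE : Efun U φ φ' s = ∑ v : U, ∑ w : U,
      if (w : G) = s⁻¹ * (v : G) * s then φ w * (starRingEnd ℂ) (φ' v) else 0 := by
    apply Finset.sum_congr rfl
    intro v _
    rw [extChar_eq_sum, Finset.sum_mul]
    apply Finset.sum_congr rfl
    intro w _
    rw [ite_mul, zero_mul]
  rw [hD, hE, Finset.sum_comm]
  apply Finset.sum_congr rfl
  intro w _
  apply Finset.sum_congr rfl
  intro v _
  apply if_congr _ rfl rfl
  constructor
  · intro h; rw [h]; group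
  · intro h; rw [h]; group

lemma sumD_eq_sumE (U : Subgroup G) (φ φ' : U →* ℂ) :
    ∑ s : G, Dfun U φ φ' s = ∑ s : G, Efun U φ φ' s :=
  Finset.sum_congr rfl (fun s _ => D_eq_E U φ φ' s)

def conjEquivSub (U : Subgroup G) (x : U) : U ≃ U where
  toFun v := x * v * x⁻¹
  invFun v := x⁻¹ * v * x
  left_inv := by intro v; group
  right_inv := by intro v; group

lemma sum_conj_reindex₁ (U : Subgroup G) (φ φ' : U →* ℂ) (x : U) (r : G) :
    ∑ v : U, extChar U φ (r⁻¹ * ((x : G)⁻¹ * (v : G) * (x : G)) * r) *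
      (starRingEnd ℂ) (φ' v) =
      ∑ v : U, extChar U φ (r⁻¹ * (v : G) * r) * (starRingEnd ℂ) (φ' v) := by
  refine (Fintype.sum_equiv (conjEquivSub U x) _ _ (fun w => ?_)).symm
  show extChar U φ (r⁻¹ * (w : G) * r) * (starRingEnd ℂ) (φ' w) =
    extChar U φ (r⁻¹ * ((x : G)⁻¹ * ((x : G) * (w : G) * (x : G)⁻¹) * (x : G)) * r) *
      (starRingEnd ℂ) (φ' (x * w * x⁻¹))
  rw [hom_conj φ' x w]
  congr 2
  group

lemma sum_conj_reindex₂ (U : Subgroup G) (φ φ' : U →* ℂ) (x : U) (r : G) :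
    ∑ v : U, extChar U φ (r⁻¹ * ((x : G) * (v : G) * (x : G)⁻¹) * r) *
      (starRingEnd ℂ) (φ' v) =
      ∑ v : U, extChar U φ (r⁻¹ * (v : G) * r) * (starRingEnd ℂ) (φ' v) := by
  refine (Fintype.sum_equiv (conjEquivSub U x).symm _ _ (fun w => ?_)).symm
  show extChar U φ (r⁻¹ * (w : G) * r) * (starRingEnd ℂ) (φ' w) =
    extChar U φ (r⁻¹ * ((x : G) * ((x : G)⁻¹ * (w : G) * (x : G)) * (x : G)⁻¹) * r) *
      (starRingEnd ℂ) (φ' (x⁻¹ * w * x))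
  rw [hom_conj' φ' x w]
  congr 2
  group

lemma E_const (Z U : Subgroup G) (hZ : Z ≤ Subgroup.center G) (φ φ' : U →* ℂ)
    {a u : G} (ha : a ∈ Z ⊔ U) (hu : u ∈ U) (r : G) :
    Efun U φ φ' (a * r * u) = Efun U φ φ' r := by
  obtain ⟨z, hz, x₀, hx₀, rfl⟩ := aux_decomp Z U hZ ha
  have h1 : ∀ g : G, g * z⁻¹ = z⁻¹ * g :=
    Subgroup.mem_center_iff.mp (hZ (inv_mem hz))
  have key : ∀ v : U, (z * x₀ * r * u)⁻¹ * (v : G) * (z * x₀ * r * u) =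
      u⁻¹ * (r⁻¹ * (x₀⁻¹ * (v : G) * x₀) * r) * u := by
    intro v
    have e1 : (z * x₀ * r * u)⁻¹ * (v : G) * (z * x₀ * r * u) =
        u⁻¹ * r⁻¹ * x₀⁻¹ * (z⁻¹ * (v : G) * z) * x₀ * r * u := by group
    have h2 : z⁻¹ * (v : G) * z = (v : G) := by
      rw [← h1 (v : G)]; group
    rw [e1, h2]
    group
  unfold Efun
  calc ∑ v : U, extChar U φ ((z * x₀ * r * u)⁻¹ * (v : G) * (z * x₀ * r * u)) *
        (starRingEnd ℂ) (φ' v)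
      = ∑ v : U, extChar U φ (r⁻¹ * (x₀⁻¹ * (v : G) * x₀) * r) *
          (starRingEnd ℂ) (φ' v) := by
        apply Finset.sum_congr rfl
        intro v _
        rw [key v, extChar_conj_s6 φ hu]
    _ = ∑ v : U, extChar U φ (r⁻¹ * (v : G) * r) * (starRingEnd ℂ) (φ' v) :=
        sum_conj_reindex₁ U φ φ' ⟨x₀, hx₀⟩ r

lemma rhs_eval (U : Subgroup G) (φ φ' : U →* ℂ) (r : G) :
    innerSub U (indCharIn U (conjSub r U ⊓ U) (restrictTo (conjSub r U ⊓ U) (conjChar r U φ)))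
      (extChar U φ') =
      (Fintype.card ↥(conjSub r U ⊓ U) : ℂ)⁻¹ * Efun U φ φ' r := by
  have hUne : (Fintype.card ↥U : ℂ) ≠ 0 := Nat.cast_ne_zero.mpr Fintype.card_ne_zero
  have hrestrict : ∀ w : G, w ∈ U →
      restrictTo (conjSub r U ⊓ U) (conjChar r U φ) w = extChar U φ (r⁻¹ * w * r) := by
    intro w hw
    unfold restrictTo
    by_cases hmem : w ∈ conjSub r U ⊓ U
    · rw [if_pos hmem]; rfl
    · rw [if_neg hmem]
      have : r⁻¹ * w * r ∉ U := by
        intro hc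
        exact hmem ⟨mem_conjSub.mpr hc, hw⟩
      rw [extChar_not_mem φ this]
  unfold innerSub indCharIn
  have step1 : ∀ u : U,
      ((Fintype.card ↥(conjSub r U ⊓ U) : ℂ)⁻¹ *
        ∑ x : U, restrictTo (conjSub r U ⊓ U) (conjChar r U φ)
          ((x : G) * (u : G) * (x : G)⁻¹)) * (starRingEnd ℂ) (extChar U φ' (u : G)) =
      (Fintype.card ↥(conjSub r U ⊓ U) : ℂ)⁻¹ *
        ∑ x : U, extChar U φ (r⁻¹ * ((x : G) * (u : G) * (x : G)⁻¹) * r) *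
          (starRingEnd ℂ) (φ' u) := by
    intro u
    rw [extChar_coe, mul_assoc, ← Finset.sum_mul]
    congr 2
    apply Finset.sum_congr rfl
    intro x _
    rw [hrestrict]
    exact mul_mem (mul_mem x.2 u.2) (inv_mem x.2)
  rw [Finset.sum_congr rfl (fun u _ => step1 u), ← Finset.mul_sum, Finset.sum_comm]
  have step2 : ∀ x : U,
      ∑ u : U, extChar U φ (r⁻¹ * ((x : G) * (u : G) * (x : G)⁻¹) * r) *
        (starRingEnd ℂ) (φ' u) = Efun U φ φ' r := by
    intro x
    exact sum_conj_reindex₂ U φ φ' x r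
  rw [Finset.sum_congr rfl (fun x _ => step2 x), Finset.sum_const, Finset.card_univ,
    nsmul_eq_mul]
  field_simp

lemma inter_eq (Z U : Subgroup G) (hZ : Z ≤ Subgroup.center G)
    (hcop : Nat.Coprime (Fintype.card Z) (Fintype.card U)) (r : G) :
    conjSub r U ⊓ (Z ⊔ U) = conjSub r U ⊓ U := by
  apply le_antisymm
  · rintro g hg
    rw [Subgroup.mem_inf] at hg
    obtain ⟨hg1, hg2⟩ := hg
    obtain ⟨z, hz, u, hu, rfl⟩ := aux_decomp Z U hZ hg2
    have hw : r⁻¹ * (z * u) * r ∈ U := mem_conjSub.mp hg1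
    have h5 : (z * u) ^ Fintype.card U = 1 := by
      have he : z * u = MulAut.conj r (r⁻¹ * (z * u) * r) := by
        simp only [MulAut.conj_apply]; group
      rw [he, ← map_pow, aux_pow_card U hw, map_one]
    have hz1 : z = 1 := aux_z_eq_one Z U hZ hcop hz (aux_pow_card U hu) h5
    rw [hz1, one_mul] at hg1 ⊢
    exact Subgroup.mem_inf.mpr ⟨hg1, hu⟩
  · exact inf_le_inf_left _ le_sup_right

lemma count_lemma (Z U : Subgroup G) (hZ : Z ≤ Subgroup.center G)
    (hcop : Nat.Coprime (Fintype.card Z) (Fintype.card U)) (r : G) :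
    (Finset.univ.filter (fun s : G => ∃ a ∈ Z ⊔ U, ∃ u ∈ U, s = a * r * u)).card *
      Fintype.card ↥(conjSub r U ⊓ U) = Fintype.card ↥(Z ⊔ U) * Fintype.card ↥U := by
  classical
  set W := conjSub r U ⊓ U with hW
  set T := Finset.univ.filter (fun s : G => ∃ a ∈ Z ⊔ U, ∃ u ∈ U, s = a * r * u) with hT
  have h0 : Fintype.card ↥(Z ⊔ U) * Fintype.card ↥U =
      (Finset.univ : Finset (↥(Z ⊔ U) × ↥U)).card := by
    rw [Finset.card_univ, Fintype.card_prod]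
  have hmap : ∀ p ∈ (Finset.univ : Finset (↥(Z ⊔ U) × ↥U)),
      (p.1 : G) * r * (p.2 : G) ∈ T := by
    intro p _
    exact Finset.mem_filter.mpr ⟨Finset.mem_univ _, ⟨p.1, p.1.2, p.2, p.2.2, rfl⟩⟩
  have hfiber : ∀ t ∈ T,
      (Finset.univ.filter (fun p : ↥(Z ⊔ U) × ↥U => (p.1 : G) * r * (p.2 : G) = t)).card =
        Fintype.card ↥W := by
    intro t ht
    obtain ⟨a₀, ha₀, u₀, hu₀, rfl⟩ := (Finset.mem_filter.mp ht).2
    rw [← Finset.card_univ]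
    refine Finset.card_bij'
      (i := fun (p : ↥(Z ⊔ U) × ↥U) (hp :
          p ∈ Finset.univ.filter
            (fun p : ↥(Z ⊔ U) × ↥U => (p.1 : G) * r * (p.2 : G) = a₀ * r * u₀)) =>
        (⟨a₀⁻¹ * (p.1 : G), by
          have heq : (p.1 : G) * r * (p.2 : G) = a₀ * r * u₀ := (Finset.mem_filter.mp hp).2
          have hm1 : a₀⁻¹ * (p.1 : G) ∈ conjSub r U ⊓ (Z ⊔ U) := by
            refine Subgroup.mem_inf.mpr ⟨mem_conjSub.mpr ?_, mul_mem (inv_mem ha₀) p.1.2⟩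
            have h2 : r⁻¹ * (a₀⁻¹ * (p.1 : G)) * r = u₀ * (p.2 : G)⁻¹ := by
              rw [show (a₀ : G)⁻¹ * (p.1 : G) =
                a₀⁻¹ * ((p.1 : G) * r * (p.2 : G)) * (p.2 : G)⁻¹ * r⁻¹ from by group, heq]
              group
            rw [h2]
            exact mul_mem hu₀ (inv_mem p.2.2)
          rwa [inter_eq Z U hZ hcop r] at hm1⟩ : ↥W))
      (j := fun (w : ↥W) _ =>
        (⟨a₀ * (w : G), mul_mem ha₀ (le_sup_right (a := Z) (b := U) w.2.2)⟩,
         ⟨r⁻¹ * (w : G)⁻¹ * r * u₀, by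
          have hwc : r⁻¹ * (w : G)⁻¹ * r ∈ U := by
            have := mem_conjSub.mp (inv_mem w.2.1)
            simpa using this
          exact mul_mem hwc hu₀⟩))
      ?hi ?hj ?left ?right
    case hi =>
      intro p hp
      exact Finset.mem_univ _
    case hj =>
      intro w _
      refine Finset.mem_filter.mpr ⟨Finset.mem_univ _, ?_⟩
      show a₀ * (w : G) * r * (r⁻¹ * (w : G)⁻¹ * r * u₀) = a₀ * r * u₀
      group
    case left =>
      intro p hp
      have heq : (p.1 : G) * r * (p.2 : G) = a₀ * r * u₀ := (Finset.mem_filter.mp hp).2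
      have h2 : (p.2 : G) = r⁻¹ * (p.1 : G)⁻¹ * (a₀ * r * u₀) := by
        rw [← heq]; group
      refine Prod.ext (Subtype.ext ?_) (Subtype.ext ?_)
      · show a₀ * (a₀⁻¹ * (p.1 : G)) = (p.1 : G)
        group
      · show r⁻¹ * (a₀⁻¹ * (p.1 : G))⁻¹ * r * u₀ = (p.2 : G)
        rw [h2]; group
    case right =>
      intro w _
      apply Subtype.ext
      show a₀⁻¹ * (a₀ * (w : G)) = (w : G)
      group
  rw [h0, Finset.card_eq_sum_card_fiberwise hmap,
    Finset.sum_congr rfl hfiber, Finset.sum_const, smul_eq_mul]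

end Aux

/-- Mackey's formula: for a set `R` of representatives of the `(ZU, U)`-double cosets in `G`,
`⟨Ind_{ZU}^G(ν ⊗ φ), Ind_U^G(φ')⟩_G = Σ_{r ∈ R} ⟨Ind_{rUr⁻¹ ∩ U}^U({}^rφ), φ'⟩_U`;
in particular this inner product does not depend on `ν`. -/
theorem stmt6 {G : Type*} [Group G] [Fintype G] (Z U : Subgroup G)
    (hZ : Z ≤ Subgroup.center G) (hZU : Z ⊓ U = ⊥)
    (hcop : Nat.Coprime (Fintype.card Z) (Fintype.card U))
    (R : Finset G)
    (hR : ∀ g : G, ∃! r, r ∈ R ∧ ∃ a ∈ Z ⊔ U, ∃ u ∈ U, g = a * r * u)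
    (ν : Z →* ℂ) (φ φ' : U →* ℂ) :
    innerSub ⊤ (indChar (Z ⊔ U) (tensorChar Z U ν φ)) (indChar U (extChar U φ')) =
      (∑ r ∈ R, innerSub U
        (indCharIn U (conjSub r U ⊓ U) (restrictTo (conjSub r U ⊓ U) (conjChar r U φ)))
        (extChar U φ')) ∧
    ∀ ν₁ ν₂ : Z →* ℂ,
      innerSub ⊤ (indChar (Z ⊔ U) (tensorChar Z U ν₁ φ)) (indChar U (extChar U φ')) =
        innerSub ⊤ (indChar (Z ⊔ U) (tensorChar Z U ν₂ φ)) (indChar U (extChar U φ')) := by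
  classical
  have hKne : (Fintype.card ↥(Z ⊔ U) : ℂ) ≠ 0 := Nat.cast_ne_zero.mpr Fintype.card_ne_zero
  have hUne : (Fintype.card ↥U : ℂ) ≠ 0 := Nat.cast_ne_zero.mpr Fintype.card_ne_zero
  have hex : ∀ g : G, ∃ r, (r ∈ R ∧ ∃ a ∈ Z ⊔ U, ∃ u ∈ U, g = a * r * u) :=
    fun g => (hR g).exists
  choose σ hσ using hex
  have huniq : ∀ g r, (r ∈ R ∧ ∃ a ∈ Z ⊔ U, ∃ u ∈ U, g = a * r * u) → r = σ g :=
    fun g r h => (hR g).unique h (hσ g)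
  have main : ∀ ν : Z →* ℂ,
      innerSub ⊤ (indChar (Z ⊔ U) (tensorChar Z U ν φ)) (indChar U (extChar U φ')) =
        ∑ r ∈ R, (Fintype.card ↥(conjSub r U ⊓ U) : ℂ)⁻¹ * Efun U φ φ' r := by
    intro ν
    rw [lhs_eval Z U hZ hcop ν φ φ', sumD_eq_sumE]
    have hpart : ∑ s : G, Efun U φ φ' s =
        ∑ r ∈ R, ∑ s ∈ Finset.univ.filter (fun s => σ s = r), Efun U φ φ' s :=
      (Finset.sum_fiberwise_of_maps_to (fun g _ => (hσ g).1) _).symm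
    rw [hpart, Finset.mul_sum]
    apply Finset.sum_congr rfl
    intro r hr
    have hfib : Finset.univ.filter (fun s => σ s = r) =
        Finset.univ.filter (fun s : G => ∃ a ∈ Z ⊔ U, ∃ u ∈ U, s = a * r * u) := by
      ext s
      simp only [Finset.mem_filter, Finset.mem_univ, true_and]
      constructor
      · rintro rfl; exact (hσ s).2
      · intro hdec; exact (huniq s r ⟨hr, hdec⟩).symm
    have hconst : ∀ s ∈ Finset.univ.filter
        (fun s : G => ∃ a ∈ Z ⊔ U, ∃ u ∈ U, s = a * r * u),
        Efun U φ φ' s = Efun U φ φ' r := by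
      intro s hs
      obtain ⟨a, ha, u, hu, rfl⟩ := (Finset.mem_filter.mp hs).2
      exact E_const Z U hZ φ φ' ha hu r
    rw [hfib, Finset.sum_congr rfl hconst, Finset.sum_const, nsmul_eq_mul]
    have hcount := count_lemma Z U hZ hcop r
    have hWne : (Fintype.card ↥(conjSub r U ⊓ U) : ℂ) ≠ 0 :=
      Nat.cast_ne_zero.mpr Fintype.card_ne_zero
    have hcast : ((Finset.univ.filter
        (fun s : G => ∃ a ∈ Z ⊔ U, ∃ u ∈ U, s = a * r * u)).card : ℂ) *
        (Fintype.card ↥(conjSub r U ⊓ U) : ℂ) =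
        (Fintype.card ↥(Z ⊔ U) : ℂ) * (Fintype.card ↥U : ℂ) := by
      exact_mod_cast congrArg (Nat.cast (R := ℂ)) hcount
    have hNW : ((Finset.univ.filter
        (fun s : G => ∃ a ∈ Z ⊔ U, ∃ u ∈ U, s = a * r * u)).card : ℂ) =
        (Fintype.card ↥(Z ⊔ U) : ℂ) * (Fintype.card ↥U : ℂ) *
          (Fintype.card ↥(conjSub r U ⊓ U) : ℂ)⁻¹ := by
      rw [eq_mul_inv_iff_mul_eq₀ hWne]
      exact hcast
    rw [hNW]
    field_simp
  refine ⟨?_, fun ν₁ ν₂ => (main ν₁).trans (main ν₂).symm⟩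
  rw [main ν]
  apply Finset.sum_congr rfl
  intro r _
  exact (rhs_eval U φ φ' r).symm
end
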